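/- Every nonzero ideal of Z[i] coprime to 2 has a unique generator congruent to 1 modulo (1+i)^3 (a primary generator). -/

import Mathlib

/-!
Since `(1+i)^3 = -2 + 2i`, a Gaussian integer `a + bi` is primary exactly when
`a + b ≡ a - b ≡ 1 (mod 4)`. For `g` prime to `1+i` both `a + b` and `a - b` are odd, and multiplying
by `i` sends `(a + b, a - b)` to `(a - b, -(a + b))`, so the four units `±1, ±i` realise the four
residue pairs `(±1, ±1)` exactly once each: every generator of a principal ideal prime to `2` has
exactly one primary associate.
-/

/-- A Gaussian integer is *primary* if it is congruent to `1` modulo `(1+i)^3`. -/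
def GaussianInt.IsPrimary (c : GaussianInt) : Prop :=
  ((1 + (⟨0, 1⟩ : GaussianInt)) ^ 3) ∣ (c - 1)

namespace GaussianInt

open Zsqrtd

theorem isUnit_iff {u : GaussianInt} :
    IsUnit u ↔ u = 1 ∨ u = -1 ∨ u = ⟨0, 1⟩ ∨ u = ⟨0, -1⟩ := by
  rw [← norm_eq_one_iff' (by norm_num)]
  constructor
  · obtain ⟨a, b⟩ := u
    intro hn
    simp only [norm_def, neg_mul, one_mul, sub_neg_eq_add] at hn
    obtain ⟨ha₁, ha₂⟩ : -1 ≤ a ∧ a ≤ 1 := by constructor <;> nlinarith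
    obtain ⟨hb₁, hb₂⟩ : -1 ≤ b ∧ b ≤ 1 := by constructor <;> nlinarith
    interval_cases a <;> interval_cases b <;> revert hn <;> decide
  · rintro (rfl | rfl | rfl | rfl) <;> decide

theorem isPrimary_iff (c : GaussianInt) :
    c.IsPrimary ↔ 4 ∣ c.re + c.im - 1 ∧ 4 ∣ c.re - c.im - 1 := by
  rw [IsPrimary, show (1 + (⟨0, 1⟩ : GaussianInt)) ^ 3 = ⟨-2, 2⟩ by decide]
  constructor
  · rintro ⟨w, hw⟩
    rw [Zsqrtd.ext_iff] at hw
    simp only [re_sub, im_sub, re_one, im_one, re_mul, im_mul] at hw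
    exact ⟨⟨-w.im, by omega⟩, ⟨-w.re, by omega⟩⟩
  · rintro ⟨⟨x, hx⟩, ⟨y, hy⟩⟩
    refine ⟨⟨-y, -x⟩, ?_⟩
    rw [Zsqrtd.ext_iff]
    simp only [re_sub, im_sub, re_one, im_one, re_mul, im_mul]
    omega

theorem one_add_i_dvd_iff (g : GaussianInt) : (⟨1, 1⟩ : GaussianInt) ∣ g ↔ 2 ∣ g.re + g.im := by
  constructor
  · rintro ⟨w, rfl⟩
    exact ⟨w.re, by simp only [re_mul, im_mul]; ring⟩
  · rintro ⟨k, hk⟩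
    refine ⟨⟨k, g.im - k⟩, ?_⟩
    rw [Zsqrtd.ext_iff]
    simp only [re_mul, im_mul]
    omega

theorem not_two_dvd_re_add_im_of_isCoprime_two {g : GaussianInt} (hg : IsCoprime g 2) :
    ¬ 2 ∣ g.re + g.im := by
  intro h
  have hu := hg.isUnit_of_dvd' ((one_add_i_dvd_iff g).2 h) ⟨⟨1, -1⟩, by decide⟩
  revert hu
  rw [isUnit_iff]
  decide

theorem exists_isUnit_isPrimary_mul {g : GaussianInt} (hg : ¬ 2 ∣ g.re + g.im) :
    ∃ u, IsUnit u ∧ (u * g).IsPrimary := by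
  have hs : (g.re + g.im) % 4 = 1 ∨ (g.re + g.im) % 4 = 3 := by omega
  have hd : (g.re - g.im) % 4 = 1 ∨ (g.re - g.im) % 4 = 3 := by omega
  simp only [isUnit_iff, isPrimary_iff]
  rcases hs with hs | hs <;> rcases hd with hd | hd
  · refine ⟨1, by simp, ?_⟩
    simp only [one_mul]
    omega
  · refine ⟨⟨0, -1⟩, by simp, ?_⟩
    simp only [re_mul, im_mul]
    omega
  · refine ⟨⟨0, 1⟩, by simp, ?_⟩
    simp only [re_mul, im_mul]
    omega
  · refine ⟨-1, by simp, ?_⟩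
    simp only [neg_mul, one_mul, re_neg, im_neg]
    omega

theorem IsPrimary.eq_of_associated {c d : GaussianInt} (hc : c.IsPrimary) (hd : d.IsPrimary)
    (h : Associated c d) : c = d := by
  obtain ⟨v, rfl⟩ := h
  rw [isPrimary_iff] at hc hd
  rcases isUnit_iff.1 v.isUnit with hv | hv | hv | hv <;> rw [hv] at hd ⊢
  · rw [mul_one]
  all_goals
    simp only [re_mul, im_mul, re_neg, im_neg, mul_neg, mul_one] at hd
    omega

end GaussianInt

theorem exists_unique_primary_generator_general
    (I : Ideal GaussianInt)
    (hcop : IsCoprime I (Ideal.span {(2 : GaussianInt)})) :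
    ∃! c : GaussianInt, Ideal.span {c} = I ∧ GaussianInt.IsPrimary c := by
  obtain ⟨g, rfl⟩ := (IsPrincipalIdealRing.principal I).principal
  have hg : IsCoprime g 2 := (Ideal.isCoprime_span_singleton_iff g 2).1 hcop
  obtain ⟨u, hu, hug⟩ :=
    GaussianInt.exists_isUnit_isPrimary_mul (GaussianInt.not_two_dvd_re_add_im_of_isCoprime_two hg)
  have hspan : Ideal.span {u * g} = Ideal.span {g} := Ideal.span_singleton_mul_left_unit hu g
  refine ⟨u * g, ⟨hspan, hug⟩, fun c ⟨hc, hcp⟩ => ?_⟩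
  exact hcp.eq_of_associated hug (Ideal.span_singleton_eq_span_singleton.1 (hc.trans hspan.symm))

/-- Every nonzero ideal of `ℤ[i]` coprime to `2` has a unique primary generator. -/
theorem exists_unique_primary_generator
    (I : Ideal GaussianInt) (hI : I ≠ ⊥)
    (hcop : IsCoprime I (Ideal.span {(2 : GaussianInt)})) :
    ∃! c : GaussianInt, Ideal.span {c} = I ∧ GaussianInt.IsPrimary c :=
  exists_unique_primary_generator_general I hcop
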